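/- arXiv:1312.5873 — 2 statements merged into one kernel-verified Lean document; each statement's English description precedes it below -/
import Mathlib

section
/- Let f(x) = x^T Q x where Q is a real symmetric n×n matrix, let r ≥ 2 be an integer, and let Q_max = max_{i ∈ [n]} Q_{ii}. Then ((r−1)/r) · f_min^{(r−2)} ≥ f_{Δ(n,r)} − (1/r) · Q_max. -/
open Finset

noncomputable section

/-- Falling factorial `t^(d) = t (t-1) ⋯ (t-d+1)`. -/
def fall (t : ℝ) : ℕ → ℝ
  | 0 => 1
  | d + 1 => fall t d * (t - (d : ℝ))

/-- The regular grid `Δ(n,r) = {x ∈ Δ_n : r·x ∈ ℕ^n}`. -/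
def regularGrid (n r : ℕ) : Set (Fin n → ℝ) :=
  {x ∈ stdSimplex ℝ (Fin n) | ∀ i, ∃ k : ℕ, (r : ℝ) * x i = (k : ℝ)}

/-- `f_{Δ(n,r)}`, the minimum of `f` over the regular grid. -/
def minGrid (n r : ℕ) (f : (Fin n → ℝ) → ℝ) : ℝ :=
  sInf (f '' regularGrid n r)

/-- `f̲`, the minimum of `f` over the standard simplex. -/
def minSimplex (n : ℕ) (f : (Fin n → ℝ) → ℝ) : ℝ :=
  sInf (f '' stdSimplex ℝ (Fin n))

/-- `f̄`, the maximum of `f` over the standard simplex. -/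
def maxSimplex (n : ℕ) (f : (Fin n → ℝ) → ℝ) : ℝ :=
  sSup (f '' stdSimplex ℝ (Fin n))

/-- The quadratic form `f(x) = xᵀ Q x`. -/
def quadForm (n : ℕ) (Q : Matrix (Fin n) (Fin n) ℝ) (x : Fin n → ℝ) : ℝ :=
  ∑ i, ∑ j, Q i j * x i * x j

/-- The Pólya-type lower bound for the quadratic form `xᵀQx`:
`f_min^{(r-2)} = min_{α ∈ I(n,r)} [αᵀQα − Σ_i Q_ii α_i] / (r(r−1))`. -/
def quadPolya (n r : ℕ) (Q : Matrix (Fin n) (Fin n) ℝ) : ℝ :=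
  sInf ((fun α : Fin n → ℕ =>
      ((∑ i, ∑ j, Q i j * (α i : ℝ) * (α j : ℝ)) - ∑ i, Q i i * (α i : ℝ)) /
        ((r : ℝ) * ((r : ℝ) - 1))) ''
    {α : Fin n → ℕ | ∑ i, α i = r})

/-! Every `α ∈ I(n,r)` yields the grid point `α / r`, so `r² f_{Δ(n,r)} ≤ αᵀQα`, while
`Σ Q_ii α_i ≤ r Q_max`. Hence every term of the Pólya bound is at least
`(r f_{Δ(n,r)} − Q_max) / (r − 1)`, and multiplying by `(r − 1) / r` gives the claim. -/

lemma quadForm_smul (n : ℕ) (Q : Matrix (Fin n) (Fin n) ℝ) (c : ℝ) (x : Fin n → ℝ) :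
    quadForm n Q (c • x) = c ^ 2 * quadForm n Q x := by
  simp only [quadForm, Finset.mul_sum]
  refine sum_congr rfl fun i _ => sum_congr rfl fun j _ => ?_
  simp only [Pi.smul_apply, smul_eq_mul]
  ring

lemma continuous_quadForm (n : ℕ) (Q : Matrix (Fin n) (Fin n) ℝ) :
    Continuous (quadForm n Q) := by
  unfold quadForm
  fun_prop

lemma bddBelow_quadForm_image_regularGrid (n r : ℕ) (Q : Matrix (Fin n) (Fin n) ℝ) :
    BddBelow (quadForm n Q '' regularGrid n r) :=
  ((isCompact_stdSimplex ℝ (Fin n)).bddBelow_image (continuous_quadForm n Q).continuousOn).mono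
    (Set.image_mono (Set.sep_subset _ _))

lemma inv_smul_mem_regularGrid {n r : ℕ} (hr : r ≠ 0) {α : Fin n → ℕ} (hα : ∑ i, α i = r) :
    (r : ℝ)⁻¹ • (fun i => (α i : ℝ)) ∈ regularGrid n r := by
  refine ⟨⟨fun i => ?_, ?_⟩, fun i => ⟨α i, ?_⟩⟩ <;> simp only [Pi.smul_apply, smul_eq_mul]
  · positivity
  · rw [← Finset.mul_sum, ← Nat.cast_sum, hα]
    field_simp
  · field_simp

lemma sq_mul_minGrid_le {n r : ℕ} (hr : r ≠ 0) (Q : Matrix (Fin n) (Fin n) ℝ)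
    {α : Fin n → ℕ} (hα : ∑ i, α i = r) :
    (r : ℝ) ^ 2 * minGrid n r (quadForm n Q) ≤ quadForm n Q (fun i => (α i : ℝ)) := by
  have hmin : minGrid n r (quadForm n Q) ≤ quadForm n Q ((r : ℝ)⁻¹ • fun i => (α i : ℝ)) :=
    csInf_le (bddBelow_quadForm_image_regularGrid n r Q)
    ⟨_, inv_smul_mem_regularGrid hr hα, rfl⟩
  rw [quadForm_smul, inv_pow, ← div_eq_inv_mul, le_div_iff₀ (by positivity)] at hmin
  linarith

lemma sum_diag_mul_le {n : ℕ} {Q : Matrix (Fin n) (Fin n) ℝ} {M : ℝ} (hM : ∀ i, Q i i ≤ M)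
    {x : Fin n → ℝ} (hx : 0 ≤ x) :
    ∑ i, Q i i * x i ≤ M * ∑ i, x i := by
  rw [Finset.mul_sum]
  exact sum_le_sum fun i _ => mul_le_mul_of_nonneg_right (hM i) (hx i)

lemma div_le_quadPolya_term {n r : ℕ} (hr : 2 ≤ r) {Q : Matrix (Fin n) (Fin n) ℝ} {M : ℝ}
    (hM : ∀ i, Q i i ≤ M) {α : Fin n → ℕ} (hα : ∑ i, α i = r) :
    ((r : ℝ) * minGrid n r (quadForm n Q) - M) / ((r : ℝ) - 1) ≤
      ((∑ i, ∑ j, Q i j * (α i : ℝ) * (α j : ℝ)) - ∑ i, Q i i * (α i : ℝ)) /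
        ((r : ℝ) * ((r : ℝ) - 1)) := by
  have hr' : (1 : ℝ) < r := by exact_mod_cast hr
  have hquad : (r : ℝ) ^ 2 * minGrid n r (quadForm n Q) ≤
      ∑ i, ∑ j, Q i j * (α i : ℝ) * (α j : ℝ) :=
    sq_mul_minGrid_le (by omega) Q hα
  have hdiag := sum_diag_mul_le hM (x := fun i => (α i : ℝ)) fun i => by positivity
  rw [← Nat.cast_sum, hα] at hdiag
  rw [← mul_div_mul_left _ _ (by positivity : (r : ℝ) ≠ 0)]
  gcongr
  linarith

theorem statement2_general (n r : ℕ) (hn : 0 < n) (hr : 2 ≤ r)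
    (Q : Matrix (Fin n) (Fin n) ℝ) :
    (((r : ℝ) - 1) / (r : ℝ)) * quadPolya n r Q ≥
      minGrid n r (quadForm n Q) - (1 / (r : ℝ)) * sSup (Set.range fun i => Q i i) := by
  set M := sSup (Set.range fun i => Q i i)
  have hM : ∀ i, Q i i ≤ M := fun i => le_csSup (Set.finite_range _).bddAbove ⟨i, rfl⟩
  have hne : {α : Fin n → ℕ | ∑ i, α i = r}.Nonempty := ⟨Pi.single ⟨0, hn⟩ r, by simp⟩
  have hpolya : ((r : ℝ) * minGrid n r (quadForm n Q) - M) / ((r : ℝ) - 1) ≤ quadPolya n r Q :=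
    le_csInf (hne.image _) fun _ ⟨_, hα, hterm⟩ => hterm ▸ div_le_quadPolya_term hr hM hα
  have hr' : (2 : ℝ) ≤ r := by exact_mod_cast hr
  have hr1 : (r : ℝ) - 1 ≠ 0 := by linarith
  calc minGrid n r (quadForm n Q) - 1 / r * M
      = ((r : ℝ) - 1) / r * (((r : ℝ) * minGrid n r (quadForm n Q) - M) / ((r : ℝ) - 1)) := by
        field_simp
    _ ≤ ((r : ℝ) - 1) / r * quadPolya n r Q := by
        gcongr
        exact div_nonneg (by linarith) (by positivity)

/-- for `f(x) = xᵀQx`, `Q` symmetric and `r ≥ 2`,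
`((r−1)/r) f_min^{(r−2)} ≥ f_{Δ(n,r)} − (1/r) Q_max`. -/
theorem statement2 (n r : ℕ) (hn : 0 < n) (hr : 2 ≤ r)
    (Q : Matrix (Fin n) (Fin n) ℝ) (hQ : Q.IsSymm) :
    (((r : ℝ) - 1) / (r : ℝ)) * quadPolya n r Q ≥
      minGrid n r (quadForm n Q) - (1 / (r : ℝ)) * sSup (Set.range fun i => Q i i) :=
  statement2_general n r hn hr Q
end
end

section
/- Let f be a homogeneous cubic polynomial in n variables with real coefficients and let r ≥ 3 be an integer. Then f_{Δ(n,r)} − f_min^{(r−3)} ≤ (4r/((r−1)(r−2))) (f̄ − f̲). -/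
open Finset

noncomputable section

/-- The homogeneous polynomial of degree `d` with coefficients `c`,
`f(x) = Σ_{β ∈ I(n,d)} c_β x^β`. -/
def homPoly (n d : ℕ) (c : (Fin n → ℕ) → ℝ) (x : Fin n → ℝ) : ℝ :=
  ∑ β ∈ Finset.Nat.antidiagonalTuple n d, c β * ∏ i, x i ^ β i

/-- The Pólya-type lower bound
`f_min^{(r-d)} = min_{α ∈ I(n,r)} Σ_{β ∈ I(n,d)} c_β α^{(β)} / r^{(d)}`. -/
def polyaBound (n d r : ℕ) (c : (Fin n → ℕ) → ℝ) : ℝ :=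
  sInf ((fun α : Fin n → ℕ =>
      (∑ β ∈ Finset.Nat.antidiagonalTuple n d,
        c β * ∏ i, fall ((α i : ℕ) : ℝ) (β i)) / fall (r : ℝ) d) ''
    {α : Fin n → ℕ | ∑ i, α i = r})

/-! For `α ∈ I(n,r)` put `x = α / r ∈ Δ(n,r)`. A falling factorial differs from the power only
in the exponents `≥ 2`, and a multi-index of degree `3` has at most one of those, so only the
coefficients `c_{ik} := c_{2e_i + e_k}` enter the correction:
`Σ_β c_β α^(β) = r³ f(x) - r² q(x) + r l(x)` with `q(x) = Σ_{i,k} c_{ik} x_i x_k + 2 Σ_i c_{ii} x_i²`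
and `l(x) = 2 Σ_i c_{ii} x_i`. Evaluating `f` at the vertices and at the edge midpoints of `Δ_n`
gives `c_{ii} = f(e_i) ∈ [f̲, f̄]` and `c_{ii} + c_{ik} + c_{ki} + c_{kk} ≤ 8 f̄`, whence
`q ≤ 4 f̄ - f̲` and `l ≥ 2 f̲` on `Δ_n`; together with `f(x) ≥ f̲` and `f(x) ≥ f_{Δ(n,r)}` the
claim becomes an inequality between real numbers. -/

lemma fall_eq_pow_of_le_one (a : ℝ) {b : ℕ} (hb : b ≤ 1) : fall a b = a ^ b := by
  interval_cases b <;> simp [fall]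

lemma fall_three (t : ℝ) : fall t 3 = t * (t - 1) * (t - 2) := by
  simp [fall]

lemma prod_fall_sub_prod_pow {ι : Type*} [Fintype ι] [DecidableEq ι] (a : ι → ℝ) (β : ι → ℕ)
    (i : ι) (h : ∀ j ≠ i, β j ≤ 1) :
    ∏ j, fall (a j) (β j) - ∏ j, a j ^ β j =
      (fall (a i) (β i) - a i ^ β i) * ∏ j ∈ univ.erase i, a j ^ β j := by
  rw [← mul_prod_erase _ _ (mem_univ i), ← mul_prod_erase _ (fun j => a j ^ β j) (mem_univ i),
    prod_congr rfl fun j hj => fall_eq_pow_of_le_one _ (h j (ne_of_mem_erase hj))]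
  ring

def cubicIndex {n : ℕ} (i k : Fin n) : Fin n → ℕ := Pi.single i 2 + Pi.single k 1

section CubicIndex

variable {n : ℕ}

lemma cubicIndex_apply (i k j : Fin n) :
    cubicIndex i k j = (if j = i then 2 else 0) + (if j = k then 1 else 0) := by
  simp [cubicIndex, Pi.single_apply]

lemma cubicIndex_mem (i k : Fin n) : cubicIndex i k ∈ Nat.antidiagonalTuple n 3 := by
  simp [Nat.mem_antidiagonalTuple, cubicIndex, sum_add_distrib]

lemma cubicIndex_injective : Function.Injective fun p : Fin n × Fin n => cubicIndex p.1 p.2 := by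
  rintro ⟨i, k⟩ ⟨i', k'⟩ h
  have hi := congrFun h i
  have hk := congrFun h k
  simp only [cubicIndex_apply] at hi hk
  ext <;> simp only <;> split_ifs at hi hk <;> omega

lemma exists_cubicIndex_eq {β : Fin n → ℕ} (hβ : β ∈ Nat.antidiagonalTuple n 3)
    (h : ¬ ∀ j, β j ≤ 1) : ∃ i k, cubicIndex i k = β := by
  rw [Nat.mem_antidiagonalTuple] at hβ
  push Not at h
  obtain ⟨i, hi⟩ := h
  have hle : Pi.single i 2 ≤ β := by
    intro j
    rcases eq_or_ne j i with rfl | hj <;> simp [*]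
    omega
  obtain ⟨γ, rfl⟩ := exists_add_of_le hle
  have hγ : ∑ j, γ j = 1 := by
    simp [sum_add_distrib] at hβ
    omega
  obtain ⟨k, hk⟩ := (Finsupp.sum_eq_one_iff (Finsupp.equivFunOnFinite.symm γ)).mp
    (by simpa [Finsupp.sum_fintype] using hγ)
  refine ⟨i, k, ?_⟩
  rw [cubicIndex, ← Finsupp.single_eq_pi_single k, ← hk]
  rfl

lemma sum_antidiagonalTuple_three {M : Type*} [AddCommMonoid M] (g : (Fin n → ℕ) → M)
    (hg : ∀ β ∈ Nat.antidiagonalTuple n 3, (∀ j, β j ≤ 1) → g β = 0) :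
    ∑ β ∈ Nat.antidiagonalTuple n 3, g β = ∑ i, ∑ k, g (cubicIndex i k) := by
  rw [← Fintype.sum_prod_type', ← sum_image fun p _ q _ h => cubicIndex_injective h]
  refine (sum_subset ?_ fun β hβ hβ' => hg β hβ ?_).symm
  · intro β hβ
    obtain ⟨p, -, rfl⟩ := mem_image.mp hβ
    exact cubicIndex_mem p.1 p.2
  · by_contra h
    obtain ⟨i, k, rfl⟩ := exists_cubicIndex_eq hβ h
    exact hβ' (mem_image_of_mem _ (mem_univ (i, k)))

lemma prod_fall_cubicIndex_sub (a : Fin n → ℝ) (i k : Fin n) :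
    ∏ j, fall (a j) (cubicIndex i k j) - ∏ j, a j ^ cubicIndex i k j =
      -(a i * a k) + if k = i then 2 * (a i - a i ^ 2) else 0 := by
  rw [prod_fall_sub_prod_pow a _ i fun j hj => by simp [cubicIndex_apply, hj]; split_ifs <;> simp]
  rcases eq_or_ne k i with rfl | hki
  · rw [prod_eq_one fun j hj => by simp [cubicIndex_apply, ne_of_mem_erase hj]]
    simp [cubicIndex_apply, fall]
    ring
  · rw [prod_eq_single_of_mem k (mem_erase.2 ⟨hki, mem_univ k⟩) fun j hj hjk => by
      simp [cubicIndex_apply, ne_of_mem_erase hj, hjk]]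
    simp [cubicIndex_apply, hki, Ne.symm hki, fall]
    ring

lemma prod_pow_cubicIndex (y : Fin n → ℝ) (i k : Fin n) :
    ∏ j, y j ^ cubicIndex i k j = y i ^ 2 * y k := by
  have hsingle (e : ℕ) (l : Fin n) : ∏ j, y j ^ (Pi.single l e : Fin n → ℕ) j = y l ^ e :=
    (Fintype.prod_eq_single l fun j hj => by simp [hj]).trans (by simp)
  simp only [cubicIndex, Pi.add_apply, pow_add, prod_mul_distrib, hsingle, pow_one]

end CubicIndex

section HomPoly

variable {n : ℕ} (c : (Fin n → ℕ) → ℝ)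

lemma homPoly_continuous (d : ℕ) : Continuous (homPoly n d c) := by
  unfold homPoly
  fun_prop

lemma homPoly_smul (d : ℕ) (t : ℝ) (x : Fin n → ℝ) :
    homPoly n d c (t • x) = t ^ d * homPoly n d c x := by
  rw [homPoly, homPoly, mul_sum]
  refine sum_congr rfl fun β hβ => ?_
  simp only [Pi.smul_apply, smul_eq_mul, mul_pow, prod_mul_distrib, prod_pow_eq_pow_sum,
    Nat.mem_antidiagonalTuple.mp hβ]
  ring

lemma sum_mul_prod_fall_eq (a : Fin n → ℝ) :
    ∑ β ∈ Nat.antidiagonalTuple n 3, c β * ∏ j, fall (a j) (β j) =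
      homPoly n 3 c a
        - (∑ i, ∑ k, c (cubicIndex i k) * a i * a k + 2 * ∑ i, c (cubicIndex i i) * a i ^ 2)
        + 2 * ∑ i, c (cubicIndex i i) * a i := by
  have hdefect : ∑ β ∈ Nat.antidiagonalTuple n 3, c β * ∏ j, fall (a j) (β j) - homPoly n 3 c a =
      ∑ i, ∑ k, c (cubicIndex i k) *
        (∏ j, fall (a j) (cubicIndex i k j) - ∏ j, a j ^ cubicIndex i k j) := by
    rw [homPoly, ← sum_sub_distrib]
    simp_rw [← mul_sub]
    refine sum_antidiagonalTuple_three _ fun β _ hβ => ?_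
    rw [prod_congr rfl fun j _ => fall_eq_pow_of_le_one _ (hβ j), sub_self, mul_zero]
  rw [sub_eq_iff_eq_add'.mp hdefect]
  simp only [prod_fall_cubicIndex_sub, mul_add, mul_ite, mul_zero, sum_add_distrib, sum_ite_eq',
    mem_univ, if_true]
  simp only [mul_neg, sum_neg_distrib, mul_sub, sum_sub_distrib, mul_sum, mul_assoc, mul_left_comm]
  ring

lemma homPoly_three_eq_of_eq_zero_off_pair (y : Fin n → ℝ) (i k : Fin n)
    (hy : ∀ j, j ≠ i → j ≠ k → y j = 0) :
    homPoly n 3 c y = ∑ i', ∑ k', c (cubicIndex i' k') * (y i' ^ 2 * y k') := by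
  rw [homPoly, sum_antidiagonalTuple_three]
  · simp only [prod_pow_cubicIndex]
  intro β hβ hβ1
  obtain ⟨j, hji, hjk, hj⟩ : ∃ j, j ≠ i ∧ j ≠ k ∧ β j ≠ 0 := by
    by_contra! h
    have : ∑ j, β j ≤ 2 := calc
      ∑ j, β j = ∑ j ∈ {i, k}, β j := (sum_subset (subset_univ _) fun j _ hj => by
        simp only [mem_insert, mem_singleton, not_or] at hj; exact h j hj.1 hj.2).symm
      _ ≤ ∑ j ∈ {i, k}, 1 := sum_le_sum fun j _ => hβ1 j
      _ ≤ 2 := by simpa using card_le_two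
    rw [Nat.mem_antidiagonalTuple.mp hβ] at this
    omega
  rw [prod_eq_zero (mem_univ j) (by simp [hy j hji hjk, hj]), mul_zero]

lemma homPoly_three_single (i : Fin n) : homPoly n 3 c (Pi.single i 1) = c (cubicIndex i i) := by
  rw [homPoly_three_eq_of_eq_zero_off_pair c _ i i fun j hj _ => Pi.single_eq_of_ne hj 1]
  simp [Pi.single_apply]

lemma homPoly_three_single_add_single {i k : Fin n} (hik : i ≠ k) :
    homPoly n 3 c (Pi.single i 1 + Pi.single k 1) =
      c (cubicIndex i i) + c (cubicIndex i k) + c (cubicIndex k i) + c (cubicIndex k k) := by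
  rw [homPoly_three_eq_of_eq_zero_off_pair c _ i k fun j hji hjk => by simp [hji, hjk]]
  simp [Pi.single_apply, add_sq, mul_add, sum_add_distrib, hik.symm]
  ring

end HomPoly

section Extremes

variable {n : ℕ} {f : (Fin n → ℝ) → ℝ}

lemma minSimplex_le (hf : Continuous f) {y : Fin n → ℝ} (hy : y ∈ stdSimplex ℝ (Fin n)) :
    minSimplex n f ≤ f y :=
  csInf_le ((isCompact_stdSimplex ℝ (Fin n)).image hf).bddBelow ⟨y, hy, rfl⟩

lemma le_maxSimplex (hf : Continuous f) {y : Fin n → ℝ} (hy : y ∈ stdSimplex ℝ (Fin n)) :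
    f y ≤ maxSimplex n f :=
  le_csSup ((isCompact_stdSimplex ℝ (Fin n)).image hf).bddAbove ⟨y, hy, rfl⟩

lemma minGrid_le (hf : Continuous f) {r : ℕ} {x : Fin n → ℝ} (hx : x ∈ regularGrid n r) :
    minGrid n r f ≤ f x :=
  csInf_le (((isCompact_stdSimplex ℝ (Fin n)).image hf).bddBelow.mono
    (Set.image_mono fun _ hy => hy.1)) ⟨x, hx, rfl⟩

end Extremes

section Coefficients

variable {n : ℕ} (c : (Fin n → ℕ) → ℝ)

lemma coeff_cubicIndex_self_mem_Icc (i : Fin n) :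
    c (cubicIndex i i) ∈ Set.Icc (minSimplex n (homPoly n 3 c)) (maxSimplex n (homPoly n 3 c)) := by
  rw [← homPoly_three_single c i]
  exact ⟨minSimplex_le (homPoly_continuous c 3) (single_mem_stdSimplex ℝ i),
    le_maxSimplex (homPoly_continuous c 3) (single_mem_stdSimplex ℝ i)⟩

lemma coeff_cubicIndex_pair_le {i k : Fin n} (hik : i ≠ k) :
    c (cubicIndex i i) + c (cubicIndex i k) + c (cubicIndex k i) + c (cubicIndex k k) ≤
      8 * maxSimplex n (homPoly n 3 c) := by
  have hmid : (1 / 2 : ℝ) • (Pi.single i 1 + Pi.single k 1) ∈ stdSimplex ℝ (Fin n) := by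
    rw [smul_add]
    exact convex_stdSimplex ℝ _ (single_mem_stdSimplex ℝ i) (single_mem_stdSimplex ℝ k)
      (by norm_num) (by norm_num) (by norm_num)
  have := le_maxSimplex (homPoly_continuous c 3) hmid
  rw [homPoly_smul, homPoly_three_single_add_single c hik] at this
  linarith

end Coefficients

lemma quadraticForm_add_two_diag_le {ι : Type*} [Fintype ι] [DecidableEq ι] (P : ι → ι → ℝ)
    {m M : ℝ} (hdiag : ∀ i, P i i ∈ Set.Icc m M)
    (hpair : ∀ i k, i ≠ k → P i i + P i k + P k i + P k k ≤ 8 * M) {x : ι → ℝ} (hx : 0 ≤ x) :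
    ∑ i, ∑ k, P i k * x i * x k + 2 * ∑ i, P i i * x i ^ 2 ≤ (4 * M - m) * (∑ i, x i) ^ 2 := by
  have hterm : ∀ i k,
      (P i k + P k i + (if i = k then 4 * P i i else 0) - (8 * M - 2 * m)) * (x i * x k) ≤ 0 := by
    intro i k
    refine mul_nonpos_of_nonpos_of_nonneg ?_ (mul_nonneg (hx i) (hx k))
    split_ifs with h
    · subst h
      linarith [(hdiag i).1, (hdiag i).2]
    · linarith [hpair i k h, (hdiag i).1, (hdiag k).1]
  have hsum : ∑ i, ∑ k,
      (P i k + P k i + (if i = k then 4 * P i i else 0) - (8 * M - 2 * m)) * (x i * x k) =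
        2 * (∑ i, ∑ k, P i k * x i * x k + 2 * ∑ i, P i i * x i ^ 2
          - (4 * M - m) * (∑ i, x i) ^ 2) := by
    have hexpand : ∀ i k,
        (P i k + P k i + (if i = k then 4 * P i i else 0) - (8 * M - 2 * m)) * (x i * x k) =
          P i k * x i * x k + P k i * x k * x i + (if i = k then 4 * (P i i * x i ^ 2) else 0)
            - (8 * M - 2 * m) * (x i * x k) := by
      intro i k
      split_ifs with h
      · subst h; ring
      · ring
    simp only [hexpand, sum_add_distrib, sum_sub_distrib, sum_ite_eq, mem_univ, if_true, ← mul_sum]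
    rw [sum_comm (f := fun i k => P k i * x k * x i), sq, sum_mul]
    ring
  have := sum_nonpos fun i (_ : i ∈ univ) => sum_nonpos fun k (_ : k ∈ univ) => hterm i k
  linarith

lemma sub_le_polya_ratio {r y q l m M : ℝ} (hr : 3 ≤ r) (hy : m ≤ y)
    (hq : q ≤ (4 * M - m) * r ^ 2) (hl : 2 * m * r ≤ l) :
    y - 4 * r / ((r - 1) * (r - 2)) * (M - m) ≤ (r ^ 3 * y - q + l) / (r * (r - 1) * (r - 2)) := by
  have hD : 0 < (r - 1) * (r - 2) := by nlinarith
  rw [div_mul_eq_mul_div, sub_div' hD.ne', div_le_div_iff₀ hD (by nlinarith)]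
  nlinarith [mul_nonneg (mul_nonneg (by linarith : (0:ℝ) ≤ r) hD.le) (sub_nonneg.2 hy)]

/-- for `f` homogeneous cubic and `r ≥ 3`,
`f_{Δ(n,r)} − f_min^{(r−3)} ≤ (4r/((r−1)(r−2)))(f̄ − f̲)`. -/
theorem statement5 (n r : ℕ) (hn : 0 < n) (hr : 3 ≤ r) (c : (Fin n → ℕ) → ℝ) :
    minGrid n r (homPoly n 3 c) - polyaBound n 3 r c ≤
      (4 * (r : ℝ) / (((r : ℝ) - 1) * ((r : ℝ) - 2))) *
        (maxSimplex n (homPoly n 3 c) - minSimplex n (homPoly n 3 c)) := by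
  have hf := homPoly_continuous c 3
  have hr' : (3 : ℝ) ≤ r := by exact_mod_cast hr
  have hr0 : (r : ℝ) ≠ 0 := by positivity
  rw [sub_le_comm]
  refine le_csInf ⟨_, Pi.single ⟨0, hn⟩ r, by simp, rfl⟩ ?_
  rintro _ ⟨α, hα, rfl⟩
  have hα' : ∑ j, (α j : ℝ) = r := by exact_mod_cast hα
  obtain ⟨x, hx, hαx⟩ : ∃ x ∈ regularGrid n r, (fun j => (α j : ℝ)) = (r : ℝ) • x :=
    ⟨(r : ℝ)⁻¹ • fun j => (α j : ℝ),
      ⟨⟨fun j => by simp; positivity, by simp [← mul_sum, hα', hr0]⟩, fun j => ⟨α j, by simp [hr0]⟩⟩,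
      by simp [smul_smul, hr0]⟩
  have hlin : 2 * minSimplex n (homPoly n 3 c) * r ≤ 2 * ∑ i, c (cubicIndex i i) * α i := by
    rw [mul_assoc, ← hα', mul_sum]
    gcongr with i
    exact (coeff_cubicIndex_self_mem_Icc c i).1
  beta_reduce
  rw [sum_mul_prod_fall_eq, fall_three, hαx, homPoly_smul]
  calc minGrid n r (homPoly n 3 c) - _ ≤ homPoly n 3 c x - _ :=
        sub_le_sub_right (minGrid_le hf hx) _
    _ ≤ _ := sub_le_polya_ratio hr' (minSimplex_le hf hx.1)
        (hα' ▸ quadraticForm_add_two_diag_le _ (coeff_cubicIndex_self_mem_Icc c)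
          (fun _ _ => coeff_cubicIndex_pair_le c) fun j => Nat.cast_nonneg _) hlin
end
end
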